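/- Fix an integer n ≥ 3, a constant C > 0, and J > 0 with J ≠ 1. Let T(ρ) = ∫_ρ^1 (1−u²)^{(n−4)/2} du, f_V(ρ; J) = (C/2)(1−ρ²)^{(n−4)/2} J exp(−(C/2) J T(ρ)), and w₀ = (C/2)T(0). Then the Kullback–Leibler-type integral satisfies ∫_0^1 f_V(ρ; J) log( f_V(ρ; J) / f_V(ρ; 1) ) dρ = (1 − e^{−J w₀}) log J − ((J−1)/J)(1 − e^{−J w₀}(1 + J w₀)). -/

import Mathlib

/-!
Substituting `w = (C/2) T(ρ)`, so that `dw = -(C/2) (1 - ρ²)^((n-4)/2) dρ`, turns the integral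
into `∫_0^{w₀} J e^{-Jw} log (J e^{-Jw} / e^{-w}) dw`, a Kullback–Leibler integral of the
exponential laws `Exp(J)` and `Exp(1)` truncated at `w₀`, which has an elementary antiderivative.
For `n = 3` the weight `(1 - ρ²)^(-1/2)` is unbounded at `ρ = 1`, so the change of variables is
used in the form that only needs the derivative to be integrable.
-/

open MeasureTheory Set intervalIntegral Real

noncomputable def expKLIntegrand (J w : ℝ) : ℝ := J * exp (-J * w) * (log J - (J - 1) * w)

lemma continuous_expKLIntegrand (J : ℝ) : Continuous (expKLIntegrand J) := by
  unfold expKLIntegrand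
  fun_prop

lemma mul_log_div_eq_mul_expKLIntegrand (a g t : ℝ) {J : ℝ} (hJ : 0 < J) :
    a * g * J * exp (-a * J * t) *
        log (a * g * J * exp (-a * J * t) / (a * g * 1 * exp (-a * 1 * t))) =
      a * g * expKLIntegrand J (a * t) := by
  rcases eq_or_ne (a * g) 0 with hag | hag
  · simp [hag]
  have hratio : a * g * J * exp (-a * J * t) / (a * g * 1 * exp (-a * 1 * t)) =
      J * exp (-(J - 1) * (a * t)) := by
    rw [div_eq_iff (by positivity), mul_comm (a * g * 1), mul_assoc J, ← mul_assoc (exp _),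
      ← exp_add]
    ring_nf
  rw [hratio, log_mul hJ.ne' (exp_ne_zero _), log_exp, expKLIntegrand]
  ring_nf

lemma hasDerivAt_expKLIntegrand_primitive {J : ℝ} (hJ : J ≠ 0) (w : ℝ) :
    HasDerivAt (fun w => exp (-J * w) * ((J - 1) * (w + 1 / J) - log J))
      (expKLIntegrand J w) w := by
  have hexp := ((hasDerivAt_id w).const_mul (-J)).exp
  have hlin := (((hasDerivAt_id w).add_const (1 / J)).const_mul (J - 1)).sub_const (log J)
  refine (hexp.mul hlin).congr_deriv ?_
  simp only [expKLIntegrand, id]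
  field_simp
  ring

lemma integral_expKLIntegrand {J : ℝ} (hJ : J ≠ 0) (w₀ : ℝ) :
    ∫ w in (0 : ℝ)..w₀, expKLIntegrand J w =
      (1 - exp (-J * w₀)) * log J - (J - 1) / J * (1 - exp (-J * w₀) * (1 + J * w₀)) := by
  rw [integral_eq_sub_of_hasDerivAt (fun w _ => hasDerivAt_expKLIntegrand_primitive hJ w)
    ((continuous_expKLIntegrand J).intervalIntegrable _ _), mul_zero, exp_zero]
  field_simp
  ring

lemma intervalIntegrable_one_sub_sq_rpow {e : ℝ} (he : -1 < e) :
    IntervalIntegrable (fun u : ℝ => (1 - u ^ 2) ^ e) volume 0 1 := by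
  have hsing : IntervalIntegrable (fun u : ℝ => (1 - u) ^ e) volume 0 1 := by
    simpa using ((intervalIntegrable_rpow' he (a := 0) (b := 1)).comp_sub_left 1).symm
  have hreg : ContinuousOn (fun u : ℝ => (1 + u) ^ e) (uIcc 0 1) := by
    intro u hu
    rw [uIcc_of_le zero_le_one] at hu
    exact (ContinuousAt.rpow_const (by fun_prop) (Or.inl (by linarith [hu.1]))).continuousWithinAt
  refine (hsing.mul_continuousOn hreg).congr fun u hu => ?_
  rw [uIoc_of_le zero_le_one] at hu
  rw [← mul_rpow (by linarith [hu.2]) (by linarith [hu.1])]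
  ring_nf

lemma hasDerivAt_integral_one_sub_sq_rpow {e : ℝ} (he : -1 < e) {r : ℝ}
    (hr : r ∈ Ioo (0 : ℝ) 1) :
    HasDerivAt (fun r => ∫ u in r..1, (1 - u ^ 2) ^ e) (-(1 - r ^ 2) ^ e) r := by
  have hmeas : Measurable fun u : ℝ => (1 - u ^ 2) ^ e := by fun_prop
  exact integral_hasDerivAt_left
    ((intervalIntegrable_one_sub_sq_rpow he).mono_set
      (uIcc_subset_uIcc (by simp [hr.1.le, hr.2.le]) (by simp)))
    hmeas.stronglyMeasurable.stronglyMeasurableAtFilter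
    (ContinuousAt.rpow_const (by fun_prop) (Or.inl (by nlinarith [hr.1, hr.2])))

lemma integral_mul_comp_integral_one_sub_sq_rpow {e : ℝ} (he : -1 < e) (a : ℝ) {k : ℝ → ℝ}
    (hk : Continuous k) :
    ∫ ρ in (0 : ℝ)..1, a * (1 - ρ ^ 2) ^ e * k (a * ∫ u in ρ..1, (1 - u ^ 2) ^ e) =
      ∫ w in (0 : ℝ)..a * ∫ u in (0 : ℝ)..1, (1 - u ^ 2) ^ e, k w := by
  set T : ℝ → ℝ := fun r => ∫ u in r..1, (1 - u ^ 2) ^ e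
  have hg := intervalIntegrable_one_sub_sq_rpow he
  have hcont : ContinuousOn (fun ρ => a * T ρ) (uIcc 0 1) :=
    continuousOn_const.mul (continuousOn_primitive_interval_left ((intervalIntegrable_iff').1 hg))
  have hsubst := integral_comp_mul_deriv''' (a := 0) (b := 1) (g := k) hcont
    (f' := fun ρ => -(a * (1 - ρ ^ 2) ^ e))
    (fun ρ hρ => by
      simp only [zero_le_one, min_eq_left, max_eq_right] at hρ
      exact ((hasDerivAt_integral_one_sub_sq_rpow he hρ).const_mul a).hasDerivWithinAt.congr_deriv
        (by ring))
    hk.continuousOn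
    (hk.continuousOn.integrableOn_compact (isCompact_uIcc.image_of_continuousOn hcont))
    ((intervalIntegrable_iff').1
      ((hg.const_mul a).neg.continuousOn_mul (hk.comp_continuousOn hcont)))
  simp only [T, integral_same, mul_zero, Function.comp_apply] at hsubst
  rw [← neg_neg (∫ w in (0 : ℝ)..a * T 0, k w), ← integral_symm, ← hsubst,
    ← intervalIntegral.integral_neg]
  congr 1 with ρ
  ring

theorem KL_divergence_formula_general (n : ℕ) (hn : 3 ≤ n) (C J : ℝ)
    (hJ : 0 < J) :
    let T : ℝ → ℝ := fun r => ∫ u in r..1, (1 - u ^ 2) ^ (((n : ℝ) - 4) / 2)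
    let f : ℝ → ℝ → ℝ := fun ρ J' => C / 2 * (1 - ρ ^ 2) ^ (((n : ℝ) - 4) / 2) * J' *
      Real.exp (-(C / 2) * J' * T ρ)
    let w₀ : ℝ := C / 2 * T 0
    (∫ ρ in (0 : ℝ)..1, f ρ J * Real.log (f ρ J / f ρ 1)) =
      (1 - Real.exp (-J * w₀)) * Real.log J -
        (J - 1) / J * (1 - Real.exp (-J * w₀) * (1 + J * w₀)) := by
  intro T f w₀
  have he : -1 < ((n : ℝ) - 4) / 2 := by
    have : (3 : ℝ) ≤ n := by exact_mod_cast hn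
    linarith
  calc ∫ ρ in (0 : ℝ)..1, f ρ J * log (f ρ J / f ρ 1)
      = ∫ ρ in (0 : ℝ)..1,
          C / 2 * (1 - ρ ^ 2) ^ (((n : ℝ) - 4) / 2) * expKLIntegrand J (C / 2 * T ρ) := by
        congr 1 with ρ
        exact mul_log_div_eq_mul_expKLIntegrand _ _ _ hJ
    _ = ∫ w in (0 : ℝ)..w₀, expKLIntegrand J w :=
        integral_mul_comp_integral_one_sub_sq_rpow he _ (continuous_expKLIntegrand J)
    _ = _ := integral_expKLIntegrand hJ.ne' w₀

/-- Fix `n ≥ 3`, `C > 0`, `J > 0` with `J ≠ 1`; let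
`T(ρ) = ∫_ρ^1 (1 - u²)^((n-4)/2) du`,
`f_V(ρ; J) = (C/2)(1-ρ²)^((n-4)/2) J exp(-(C/2) J T(ρ))`, and `w₀ = (C/2)T(0)`.
Then `∫_0^1 f_V(ρ; J) log(f_V(ρ; J)/f_V(ρ; 1)) dρ
  = (1 - e^(-J w₀)) log J - ((J-1)/J)(1 - e^(-J w₀)(1 + J w₀))`. -/
theorem KL_divergence_formula (n : ℕ) (hn : 3 ≤ n) (C J : ℝ) (hC : 0 < C)
    (hJ : 0 < J) (hJ1 : J ≠ 1) :
    let T : ℝ → ℝ := fun r => ∫ u in r..1, (1 - u ^ 2) ^ (((n : ℝ) - 4) / 2)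
    let f : ℝ → ℝ → ℝ := fun ρ J' => C / 2 * (1 - ρ ^ 2) ^ (((n : ℝ) - 4) / 2) * J' *
      Real.exp (-(C / 2) * J' * T ρ)
    let w₀ : ℝ := C / 2 * T 0
    (∫ ρ in (0 : ℝ)..1, f ρ J * Real.log (f ρ J / f ρ 1)) =
      (1 - Real.exp (-J * w₀)) * Real.log J -
        (J - 1) / J * (1 - Real.exp (-J * w₀) * (1 + J * w₀)) :=
  KL_divergence_formula_general n hn C J hJ
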